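/- Let a and b be distinct unlooped adjacent vertices in a vertex-weighted graph G. Then q(G) = β(a)·q(G−a) + α(a)·q((G^{ab}−b)′), where (G^{ab}−b)′ is obtained from the pivot G^{ab} with b deleted by changing the weights of a to α′(a) = β(b) and β′(a) = α(b)·(x−1)². -/

import Mathlib

open Finset

/-- GF(2) rank of the adjacency matrix of the induced subgraph on `S`. -/
noncomputable def mrank {V : Type} [Fintype V] [DecidableEq V]
    (M : Matrix V V (ZMod 2)) (S : Finset V) : ℕ :=
  (Matrix.of (fun i j : {v // v ∈ S} => M i.1 j.1)).rank

/-- The weighted interlace polynomial of the graph with adjacency matrix `M`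
restricted to the vertex set `U`, with vertex weights `α`, `β`, evaluated at `x`, `y`. -/
noncomputable def interlaceQ {V : Type} [Fintype V] [DecidableEq V]
    {R : Type} [CommRing R] (M : Matrix V V (ZMod 2)) (U : Finset V)
    (α β : V → R) (x y : R) : R :=
  ∑ S ∈ U.powerset, (∏ s ∈ S, α s) * (∏ v ∈ U \ S, β v) *
    (x - 1) ^ mrank M S * (y - 1) ^ (S.card - mrank M S)

/-- Local complementation at `a`: toggle adjacencies (including loops) among
neighbors of `a` distinct from `a`. -/
def localComp {V : Type} [DecidableEq V] (M : Matrix V V (ZMod 2)) (a : V) :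
    Matrix V V (ZMod 2) :=
  fun i j => if i = a ∨ j = a then M i j else M i j + M i a * M j a

/-- Pivot at the edge `ab`. -/
def pivot {V : Type} [DecidableEq V] (M : Matrix V V (ZMod 2)) (a b : V) :
    Matrix V V (ZMod 2) :=
  fun i j => if i = a ∨ i = b ∨ j = a ∨ j = b then M i j
    else M i j + M i a * M j b + M i b * M j a


section AuxRank

open Matrix Module

section BlockDiag


variable {K : Type} [Field K]

lemma finrank_submodule_prod {V W : Type} [AddCommGroup V] [AddCommGroup W]
    [Module K V] [Module K W] [FiniteDimensional K V] [FiniteDimensional K W]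
    (p : Submodule K V) (q : Submodule K W) :
    finrank K (p.prod q) = finrank K p + finrank K q := by
  have h1 : p.prod q = p.map (LinearMap.inl K V W) ⊔ q.map (LinearMap.inr K V W) :=
    LinearMap.prod_eq_sup_map p q
  have h2 : p.map (LinearMap.inl K V W) ⊓ q.map (LinearMap.inr K V W) = ⊥ := by
    rw [Submodule.map_inl, Submodule.map_inr]
    ext ⟨u, w⟩
    simp only [Submodule.mem_inf, Submodule.mem_prod, Submodule.mem_bot, Prod.mk_eq_zero]
    constructor
    · rintro ⟨⟨_, hw⟩, ⟨hu, _⟩⟩; exact ⟨hu, hw⟩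
    · rintro ⟨rfl, rfl⟩; exact ⟨⟨p.zero_mem, rfl⟩, ⟨rfl, q.zero_mem⟩⟩
  have h3 := Submodule.finrank_sup_add_finrank_inf_eq
    (p.map (LinearMap.inl K V W)) (q.map (LinearMap.inr K V W))
  rw [h2, finrank_bot, add_zero] at h3
  have ep : finrank K (p.map (LinearMap.inl K V W)) = finrank K p :=
    ((p.equivMapOfInjective _ LinearMap.inl_injective).finrank_eq).symm
  have eq' : finrank K (q.map (LinearMap.inr K V W)) = finrank K q :=
    ((q.equivMapOfInjective _ LinearMap.inr_injective).finrank_eq).symm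
  rw [h1, h3, ep, eq']

lemma range_prodMap' {V W V' W' : Type} [AddCommGroup V] [AddCommGroup W]
    [AddCommGroup V'] [AddCommGroup W'] [Module K V] [Module K W] [Module K V'] [Module K W']
    (f : V →ₗ[K] V') (g : W →ₗ[K] W') :
    LinearMap.range (f.prodMap g) = (LinearMap.range f).prod (LinearMap.range g) := by
  ext ⟨u, w⟩
  simp only [LinearMap.mem_range, Submodule.mem_prod, LinearMap.prodMap_apply, Prod.mk.injEq,
    Prod.exists]
  constructor
  · rintro ⟨p, q, h1, h2⟩; exact ⟨⟨p, h1⟩, ⟨q, h2⟩⟩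
  · rintro ⟨⟨p, h1⟩, ⟨q, h2⟩⟩; exact ⟨p, q, h1, h2⟩

lemma rank_fromBlocks_diag {l m : Type} [Fintype l] [Fintype m] [DecidableEq l] [DecidableEq m]
    (A : Matrix l l K) (D : Matrix m m K) :
    (Matrix.fromBlocks A 0 0 D).rank = A.rank + D.rank := by
  classical
  let e := LinearEquiv.sumArrowLequivProdArrow l m K K
  have hcomp : (Matrix.fromBlocks A 0 0 D).mulVecLin
      = (e.symm.toLinearMap ∘ₗ (A.mulVecLin.prodMap D.mulVecLin)) ∘ₗ e.toLinearMap := by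
    apply LinearMap.ext; intro v; funext i
    cases i with
    | inl i =>
      simp [e, Matrix.mulVecLin, Matrix.mulVec, Matrix.fromBlocks, dotProduct,
        Fintype.sum_sum_type, LinearEquiv.sumArrowLequivProdArrow,
        Equiv.sumArrowEquivProdArrow]
    | inr i =>
      simp [e, Matrix.mulVecLin, Matrix.mulVec, Matrix.fromBlocks, dotProduct,
        Fintype.sum_sum_type, LinearEquiv.sumArrowLequivProdArrow,
        Equiv.sumArrowEquivProdArrow]
  rw [Matrix.rank, hcomp, LinearMap.range_comp_of_range_eq_top _ e.range,
    LinearMap.range_comp, LinearEquiv.finrank_map_eq, range_prodMap',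
    finrank_submodule_prod]
  rfl

end BlockDiag

section Cong


variable {ι : Type} [Fintype ι] [DecidableEq ι]

/-- Elementary "add multiple of row/col a₀" matrix over ZMod 2. -/
def elimMat (u : ι → ZMod 2) (a₀ : ι) : Matrix ι ι (ZMod 2) :=
  Matrix.of fun i k => u i * (if k = a₀ then 1 else 0)

lemma elimMat_mul (u : ι → ZMod 2) (a₀ : ι) (X : Matrix ι ι (ZMod 2)) (i j : ι) :
    (elimMat u a₀ * X) i j = u i * X a₀ j := by
  simp [elimMat, Matrix.mul_apply, ite_mul, mul_assoc]

lemma mul_elimMat_t (u : ι → ZMod 2) (a₀ : ι) (X : Matrix ι ι (ZMod 2)) (i j : ι) :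
    (X * (elimMat u a₀)ᵀ) i j = X i a₀ * u j := by
  simp [elimMat, Matrix.mul_apply, Matrix.transpose_apply, mul_comm, mul_left_comm]

lemma elimMat_sq (u : ι → ZMod 2) (a₀ : ι) (hu : u a₀ = 0) :
    (1 + elimMat u a₀) * (1 + elimMat u a₀) = 1 := by
  have expand : (1 + elimMat u a₀) * (1 + elimMat u a₀)
      = 1 + (elimMat u a₀ + elimMat u a₀ + elimMat u a₀ * elimMat u a₀) := by
    noncomm_ring
  rw [expand]
  have h0 : elimMat u a₀ + elimMat u a₀ + elimMat u a₀ * elimMat u a₀ = 0 := by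
    ext i j
    rw [Matrix.add_apply, Matrix.add_apply, elimMat_mul]
    simp [elimMat, hu]
    exact CharTwo.add_self_eq_zero _
  rw [h0, add_zero]

lemma rank_conj (u : ι → ZMod 2) (a₀ : ι) (hu : u a₀ = 0) (X : Matrix ι ι (ZMod 2)) :
    ((1 + elimMat u a₀) * X * (1 + elimMat u a₀)ᵀ).rank = X.rank := by
  haveI : Invertible (1 + elimMat u a₀) :=
    ⟨1 + elimMat u a₀, elimMat_sq u a₀ hu, elimMat_sq u a₀ hu⟩
  have hun : IsUnit (1 + elimMat u a₀) := isUnit_of_invertible _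
  have hdet : IsUnit (1 + elimMat u a₀).det := (Matrix.isUnit_iff_isUnit_det _).mp hun
  have hdet' : IsUnit ((1 + elimMat u a₀)ᵀ).det := by rwa [Matrix.det_transpose]
  rw [Matrix.rank_mul_eq_left_of_isUnit_det _ _ hdet',
    Matrix.rank_mul_eq_right_of_isUnit_det _ _ hdet]

lemma conj_apply (u : ι → ZMod 2) (a₀ : ι) (X : Matrix ι ι (ZMod 2)) (h0 : X a₀ a₀ = 0)
    (i j : ι) :
    (((1 + elimMat u a₀) * X * (1 + elimMat u a₀)ᵀ : Matrix ι ι (ZMod 2))) i j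
      = X i j + u i * X a₀ j + X i a₀ * u j := by
  have ptrans : (1 + elimMat u a₀)ᵀ = 1 + (elimMat u a₀)ᵀ := by
    rw [Matrix.transpose_add, Matrix.transpose_one]
  have expand : (1 + elimMat u a₀) * X * (1 + elimMat u a₀)ᵀ
      = X + elimMat u a₀ * X + (X * (elimMat u a₀)ᵀ + elimMat u a₀ * X * (elimMat u a₀)ᵀ) := by
    rw [ptrans]; noncomm_ring
  rw [expand]
  have h4 : (elimMat u a₀ * X * (elimMat u a₀)ᵀ) i j = 0 := by
    rw [mul_elimMat_t, elimMat_mul, h0]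
    ring
  simp only [Matrix.add_apply, h4, add_zero, elimMat_mul, mul_elimMat_t]

end Cong
lemma mrank_pivot_eq {V : Type} [Fintype V] [DecidableEq V] (M : Matrix V V (ZMod 2))
    (hM : M.IsSymm) (a b : V) (ha : M a a = 0) (S : Finset V) (haS : a ∈ S) (hbS : b ∉ S) :
    mrank (pivot M a b) S = mrank M S := by
  classical
  set ι := {v // v ∈ S}
  let a₀ : ι := ⟨a, haS⟩
  let u : ι → ZMod 2 := fun i => if i = a₀ then 0 else M i.1 b
  set X : Matrix ι ι (ZMod 2) := Matrix.of (fun i j : ι => M i.1 j.1) with hX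
  have hX00 : X a₀ a₀ = 0 := ha
  have key : Matrix.of (fun i j : ι => pivot M a b i.1 j.1)
      = (1 + elimMat u a₀) * X * (1 + elimMat u a₀)ᵀ := by
    ext i j
    rw [conj_apply u a₀ X hX00]
    have hib : i.1 ≠ b := fun h => hbS (h ▸ i.2)
    have hjb : j.1 ≠ b := fun h => hbS (h ▸ j.2)
    by_cases hia : i = a₀
    · subst hia
      have : u a₀ = 0 := by simp [u]
      simp only [Matrix.of_apply, pivot, this, zero_mul, add_zero]
      rw [if_pos (Or.inl rfl)]
      show M a j.1 = X a₀ j + X a₀ a₀ * u j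
      rw [hX00]; ring_nf; rfl
    · by_cases hja : j = a₀
      · subst hja
        have hu : u a₀ = 0 := by simp [u]
        simp only [Matrix.of_apply, pivot, hu, mul_zero, add_zero]
        rw [if_pos (Or.inr (Or.inr (Or.inl rfl)))]
        show M i.1 a = X i a₀ + u i * X a₀ a₀
        rw [hX00]; ring_nf; rfl
      · have hia' : i.1 ≠ a := fun h => hia (Subtype.ext h)
        have hja' : j.1 ≠ a := fun h => hja (Subtype.ext h)
        simp only [Matrix.of_apply, pivot]
        rw [if_neg (by tauto)]
        have hui : u i = M i.1 b := by simp [u, hia]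
        have huj : u j = M j.1 b := by simp [u, hja]
        show M i.1 j.1 + M i.1 a * M j.1 b + M i.1 b * M j.1 a
          = X i j + u i * X a₀ j + X i a₀ * u j
        rw [hui, huj]
        show _ = M i.1 j.1 + M i.1 b * M a j.1 + M i.1 a * M j.1 b
        rw [hM.apply j.1 a]  -- hoping: M a j.1 = ... check direction
        ring
  show (Matrix.of (fun i j : ι => pivot M a b i.1 j.1)).rank = X.rank
  rw [key, rank_conj u a₀ (by simp [u]) X]

lemma mrank_insert_insert {V : Type} [Fintype V] [DecidableEq V] (M : Matrix V V (ZMod 2))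
    (hM : M.IsSymm) (a b : V) (hab : a ≠ b) (ha : M a a = 0) (hb : M b b = 0)
    (hadj : M a b = 1) (S : Finset V) (haS : a ∉ S) (hbS : b ∉ S) :
    mrank M (insert a (insert b S)) = 2 + mrank (pivot M a b) S := by
  classical
  set T := insert a (insert b S) with hT
  set σ := {v // v ∈ S}
  have hba : M b a = 1 := by rw [← hM.apply a b] at hadj; exact hadj
  -- the equiv
  have haT : a ∈ T := mem_insert_self _ _
  have hbT : b ∈ T := mem_insert_of_mem (mem_insert_self _ _)
  have hST : ∀ v : σ, v.1 ∈ T := fun v => mem_insert_of_mem (mem_insert_of_mem v.2)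
  let ε : Bool ⊕ σ ≃ {v // v ∈ T} :=
    { toFun := fun i => match i with
        | Sum.inl true => ⟨a, haT⟩
        | Sum.inl false => ⟨b, hbT⟩
        | Sum.inr v => ⟨v.1, hST v⟩
      invFun := fun v => if h : v.1 ∈ S then Sum.inr ⟨v.1, h⟩
        else if v.1 = a then Sum.inl true else Sum.inl false
      left_inv := by
        rintro (b' | v)
        · cases b' <;> simp [hbS, haS, hab.symm]
        · simp [v.2]
      right_inv := by
        rintro ⟨v, hv⟩
        by_cases h : v ∈ S
        · simp [h]
        · by_cases hva : v = a
          · subst hva; simp [haS]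
          · have hvb : v = b := by
              rcases mem_insert.mp hv with h1 | h2
              · exact absurd h1 hva
              · rcases mem_insert.mp h2 with h3 | h4
                · exact h3
                · exact absurd h4 h
            subst hvb; simp [hbS, hab.symm] }
  let X : Matrix {v // v ∈ T} {v // v ∈ T} (ZMod 2) := Matrix.of (fun i j => M i.1 j.1)
  let A₀ : Matrix Bool Bool (ZMod 2) := Matrix.of (fun i j => if i = j then 0 else 1)
  let B : Matrix Bool σ (ZMod 2) := Matrix.of (fun i v => M (bif i then a else b) v.1)
  let C : Matrix σ Bool (ZMod 2) := Matrix.of (fun v i => M v.1 (bif i then a else b))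
  let D : Matrix σ σ (ZMod 2) := Matrix.of (fun v w => M v.1 w.1)
  have hsub : X.submatrix ε ε = Matrix.fromBlocks A₀ B C D := by
    ext i j
    rcases i with (_|_) | v <;> rcases j with (_|_) | w <;>
      simp [X, A₀, B, C, D, ε, Matrix.fromBlocks, ha, hb, hadj, hba, hab]
  haveI : Invertible A₀ := ⟨A₀, by decide, by decide⟩
  haveI : Invertible (1 : Matrix Bool Bool (ZMod 2)) := invertibleOne
  haveI : Invertible (1 : Matrix σ σ (ZMod 2)) := invertibleOne
  have hrk : X.rank = (Matrix.fromBlocks A₀ B C D).rank := by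
    rw [← hsub, Matrix.rank_submatrix]
  have hfact := Matrix.fromBlocks_eq_of_invertible₁₁ A₀ B C D
  -- invertibility of the triangular factors
  haveI iL : Invertible (Matrix.fromBlocks (1 : Matrix Bool Bool (ZMod 2)) 0 (C * ⅟A₀)
      (1 : Matrix σ σ (ZMod 2))) := Matrix.fromBlocksZero₁₂Invertible _ _ _
  haveI iU : Invertible (Matrix.fromBlocks (1 : Matrix Bool Bool (ZMod 2)) (⅟A₀ * B) 0
      (1 : Matrix σ σ (ZMod 2))) := Matrix.fromBlocksZero₂₁Invertible _ _ _
  have hdetL : IsUnit (Matrix.fromBlocks (1 : Matrix Bool Bool (ZMod 2)) 0 (C * ⅟A₀)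
      (1 : Matrix σ σ (ZMod 2))).det := (Matrix.isUnit_iff_isUnit_det _).mp (isUnit_of_invertible _)
  have hdetU : IsUnit (Matrix.fromBlocks (1 : Matrix Bool Bool (ZMod 2)) (⅟A₀ * B) 0
      (1 : Matrix σ σ (ZMod 2))).det := (Matrix.isUnit_iff_isUnit_det _).mp (isUnit_of_invertible _)
  have hrk2 : (Matrix.fromBlocks A₀ B C D).rank
      = (Matrix.fromBlocks A₀ 0 0 (D - C * ⅟A₀ * B)).rank := by
    rw [hfact, Matrix.rank_mul_eq_left_of_isUnit_det _ _ hdetU,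
      Matrix.rank_mul_eq_right_of_isUnit_det _ _ hdetL]
  have hA₀rank : A₀.rank = 2 := by
    rw [Matrix.rank_of_isUnit A₀ (isUnit_of_invertible _)]
    simp
  have hschur : D - C * ⅟A₀ * B = Matrix.of (fun v w : σ => pivot M a b v.1 w.1) := by
    have hinv : (⅟A₀ : Matrix Bool Bool (ZMod 2)) = A₀ := invOf_eq_right_inv (by decide)
    ext v w
    have hva : v.1 ≠ a := fun h => haS (h ▸ v.2)
    have hvb : v.1 ≠ b := fun h => hbS (h ▸ v.2)
    have hwa : w.1 ≠ a := fun h => haS (h ▸ w.2)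
    have hwb : w.1 ≠ b := fun h => hbS (h ▸ w.2)
    have hCAB : (C * ⅟A₀ * B) v w = M v.1 a * M w.1 b + M v.1 b * M w.1 a := by
      rw [hinv]
      simp only [Matrix.mul_apply, Fintype.sum_bool]
      simp only [A₀, B, C, Matrix.of_apply, cond_true, cond_false]
      norm_num
      rw [show M a w.1 = M w.1 a from hM.apply w.1 a, show M b w.1 = M w.1 b from hM.apply w.1 b]
      ring
    rw [Matrix.sub_apply, hCAB]
    simp only [Matrix.of_apply, pivot, D]
    rw [if_neg (by tauto)]
    have : ∀ x y : ZMod 2, x - y = x + y := by decide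
    rw [this]; ring
  show X.rank = 2 + _
  rw [hrk, hrk2, hschur, rank_fromBlocks_diag, hA₀rank]
  rfl

end AuxRank

theorem pivot_two_term {V : Type} [Fintype V] [DecidableEq V]
    {R : Type} [CommRing R] (M : Matrix V V (ZMod 2)) (hM : M.IsSymm)
    (α β : V → R) (x y : R) (a b : V) (hab : a ≠ b)
    (ha : M a a = 0) (hb : M b b = 0) (hadj : M a b = 1) :
    interlaceQ M Finset.univ α β x y =
      β a * interlaceQ M (Finset.univ.erase a) α β x y +
        α a * interlaceQ (pivot M a b) (Finset.univ.erase b)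
          (Function.update α a (β b)) (Function.update β a (α b * (x - 1) ^ 2)) x y := by
  classical
  set N := pivot M a b with hN
  set α' := Function.update α a (β b) with hα'
  set β' := Function.update β a (α b * (x - 1) ^ 2) with hβ'
  set V' : Finset V := (Finset.univ.erase a).erase b with hV'
  have haV' : a ∉ V' := fun h => (Finset.mem_erase.mp (Finset.mem_erase.mp h).2).1 rfl
  have hbV' : b ∉ V' := fun h => (Finset.mem_erase.mp h).1 rfl
  have hbea : b ∈ Finset.univ.erase a := Finset.mem_erase.mpr ⟨hab.symm, Finset.mem_univ b⟩
  have haeb : a ∈ Finset.univ.erase b := Finset.mem_erase.mpr ⟨hab, Finset.mem_univ a⟩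
  have h1 : (Finset.univ : Finset V) = insert a (Finset.univ.erase a) :=
    (Finset.insert_erase (Finset.mem_univ a)).symm
  have h2 : Finset.univ.erase a = insert b V' := (Finset.insert_erase hbea).symm
  have h3 : (Finset.univ.erase b : Finset V) = insert a V' := by
    rw [hV', Finset.erase_right_comm]
    exact (Finset.insert_erase haeb).symm
  -- the summand over ground set univ
  set f : Finset V → R := fun S => (∏ s ∈ S, α s) * (∏ v ∈ Finset.univ \ S, β v) *
    (x - 1) ^ mrank M S * (y - 1) ^ (S.card - mrank M S) with hf
  set h : Finset V → R := fun T => (∏ s ∈ T, α' s) * (∏ v ∈ Finset.univ.erase b \ T, β' v) *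
    (x - 1) ^ mrank N T * (y - 1) ^ (T.card - mrank N T) with hh
  have LHS : interlaceQ M Finset.univ α β x y
      = ∑ S ∈ V'.powerset, f S + ∑ S ∈ V'.powerset, f (insert b S)
        + (∑ S ∈ V'.powerset, f (insert a S)
           + ∑ S ∈ V'.powerset, f (insert a (insert b S))) := by
    rw [interlaceQ]
    rw [show (Finset.univ : Finset V) = insert a (Finset.univ.erase a) from h1]
    rw [Finset.sum_powerset_insert (Finset.notMem_erase a _)]
    rw [h2, Finset.sum_powerset_insert hbV', Finset.sum_powerset_insert hbV']
    simp only [show insert a (insert b V') = (Finset.univ : Finset V) from by rw [← h2, ← h1]]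
    rfl
  have RHS : interlaceQ N (Finset.univ.erase b) α' β' x y
      = ∑ T ∈ V'.powerset, h T + ∑ T ∈ V'.powerset, h (insert a T) := by
    rw [interlaceQ, h3, Finset.sum_powerset_insert haV']
    simp only [show insert a V' = Finset.univ.erase b from h3.symm]
    rfl
  rw [LHS, RHS]
  -- first part: β a * interlaceQ on erase a
  have first : ∑ S ∈ V'.powerset, f S + ∑ S ∈ V'.powerset, f (insert b S)
      = β a * interlaceQ M (Finset.univ.erase a) α β x y := by
    rw [interlaceQ, h2, Finset.sum_powerset_insert hbV', mul_add, Finset.mul_sum,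
      Finset.mul_sum]
    simp only [show insert b V' = Finset.univ.erase a from h2.symm]
    have key : ∀ S : Finset V, S ∈ (Finset.univ.erase a).powerset →
        f S = β a * ((∏ s ∈ S, α s) * (∏ v ∈ Finset.univ.erase a \ S, β v) *
          (x - 1) ^ mrank M S * (y - 1) ^ (S.card - mrank M S)) := by
      intro S hS
      have haS : a ∉ S := fun hc => Finset.notMem_erase a _ (Finset.mem_powerset.mp hS hc)
      have hsd : (Finset.univ : Finset V) \ S = insert a (Finset.univ.erase a \ S) := by
        ext v
        simp only [Finset.mem_sdiff, Finset.mem_univ, true_and, Finset.mem_insert,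
          Finset.mem_erase]
        by_cases hv : v = a
        · subst hv; tauto
        · tauto
      have hains : a ∉ Finset.univ.erase a \ S := fun hc =>
        Finset.notMem_erase a _ (Finset.mem_sdiff.mp hc).1
      rw [hf]
      simp only
      rw [hsd, Finset.prod_insert hains]
      ring
    have hsub1 : V' ⊆ Finset.univ.erase a := by rw [hV']; exact Finset.erase_subset _ _
    congr 1
    · exact Finset.sum_congr rfl fun S hS =>
        key S (Finset.mem_powerset.mpr ((Finset.mem_powerset.mp hS).trans hsub1))
    · exact Finset.sum_congr rfl fun S hS =>
        key (insert b S) (Finset.mem_powerset.mpr (by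
          rw [h2]
          exact Finset.insert_subset_insert _ (Finset.mem_powerset.mp hS)))
  have secondA : ∀ S ∈ V'.powerset, f (insert a S) = α a * h (insert a S) := by
    intro S hS
    have hSV : S ⊆ V' := Finset.mem_powerset.mp hS
    have haS : a ∉ S := fun hc => haV' (hSV hc)
    have hbS : b ∉ S := fun hc => hbV' (hSV hc)
    have hbaS : b ∉ insert a S := by
      simp only [Finset.mem_insert]; rintro (h' | h') <;> [exact hab h'.symm; exact hbS h']
    have hr : mrank N (insert a S) = mrank M (insert a S) :=
      mrank_pivot_eq M hM a b ha (insert a S) (Finset.mem_insert_self a S) hbaS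
    have hsd : (Finset.univ : Finset V) \ insert a S
        = insert b (Finset.univ.erase b \ insert a S) := by
      ext v
      simp only [Finset.mem_sdiff, Finset.mem_univ, true_and, Finset.mem_insert,
        Finset.mem_erase]
      by_cases hv : v = b
      · subst hv
        simp only [true_or, iff_true]
        exact fun hc => hbaS (Finset.mem_insert.mpr hc)
      · tauto
    have hbins : b ∉ Finset.univ.erase b \ insert a S := fun hc =>
      Finset.notMem_erase b _ (Finset.mem_sdiff.mp hc).1
    have hprodα : ∏ s ∈ insert a S, α s = α a * ∏ s ∈ S, α s := Finset.prod_insert haS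
    have hprodα' : ∏ s ∈ insert a S, α' s = β b * ∏ s ∈ S, α s := by
      rw [Finset.prod_insert haS, hα', Function.update_self]
      congr 1
      exact Finset.prod_congr rfl fun s hsmem =>
        Function.update_of_ne (fun (hc : s = a) => haS (hc ▸ hsmem)) _ _
    have hprodβ' : ∏ v ∈ Finset.univ.erase b \ insert a S, β' v
        = ∏ v ∈ Finset.univ.erase b \ insert a S, β v := by
      refine Finset.prod_congr rfl fun v hv => ?_
      have : v ≠ a := fun hc =>
        (Finset.mem_sdiff.mp hv).2 (hc ▸ Finset.mem_insert_self a S)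
      exact Function.update_of_ne this _ _
    rw [hf, hh]
    simp only
    rw [hprodα, hprodα', hprodβ', hr, hsd, Finset.prod_insert hbins]
    ring
  have secondB : ∀ S ∈ V'.powerset, f (insert a (insert b S)) = α a * h S := by
    intro S hS
    have hSV : S ⊆ V' := Finset.mem_powerset.mp hS
    have haS : a ∉ S := fun hc => haV' (hSV hc)
    have hbS : b ∉ S := fun hc => hbV' (hSV hc)
    have habS : a ∉ insert b S := by
      simp only [Finset.mem_insert]; rintro (h' | h') <;> [exact hab h'; exact haS h']
    have hr : mrank M (insert a (insert b S)) = 2 + mrank N S :=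
      mrank_insert_insert M hM a b hab ha hb hadj S haS hbS
    have hcard : (insert a (insert b S)).card = S.card + 2 := by
      rw [Finset.card_insert_of_notMem habS, Finset.card_insert_of_notMem hbS]
    have hsd : (Finset.univ : Finset V) \ insert a (insert b S) = V' \ S := by
      ext v
      simp only [Finset.mem_sdiff, Finset.mem_univ, true_and, Finset.mem_insert, hV',
        Finset.mem_erase]
      tauto
    have hsd2 : Finset.univ.erase b \ S = insert a (V' \ S) := by
      ext v
      simp only [Finset.mem_sdiff, Finset.mem_insert, hV', Finset.mem_erase, Finset.mem_univ,
        and_true, true_and]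
      by_cases hv : v = a
      · subst hv; simp [hab, haS]
      · tauto
    have hains : a ∉ V' \ S := fun hc => haV' (Finset.mem_sdiff.mp hc).1
    have hprodα : ∏ s ∈ insert a (insert b S), α s = α a * (α b * ∏ s ∈ S, α s) := by
      rw [Finset.prod_insert habS, Finset.prod_insert hbS]
    have hprodα' : ∏ s ∈ S, α' s = ∏ s ∈ S, α s :=
      Finset.prod_congr rfl fun s hsmem =>
        Function.update_of_ne (fun (hc : s = a) => haS (hc ▸ hsmem)) _ _
    have hprodβ' : ∏ v ∈ Finset.univ.erase b \ S, β' v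
        = α b * (x - 1) ^ 2 * ∏ v ∈ V' \ S, β v := by
      rw [hsd2, Finset.prod_insert hains, hβ', Function.update_self]
      congr 1
      exact Finset.prod_congr rfl fun v hv =>
        Function.update_of_ne (fun (hc : v = a) => hains (hc ▸ hv)) _ _
    have hmle : mrank N S ≤ S.card := by
      have := Matrix.rank_le_card_width (Matrix.of
        (fun i j : {v // v ∈ S} => N i.1 j.1))
      simpa [mrank] using this
    have hexp : (insert a (insert b S)).card - mrank M (insert a (insert b S))
        = S.card - mrank N S := by
      rw [hr, hcard]; omega
    rw [hf, hh]
    simp only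
    rw [hprodα, hprodα', hprodβ', hexp, hr, hsd, pow_add]
    ring
  rw [mul_add, Finset.mul_sum, Finset.mul_sum, ← first,
    Finset.sum_congr rfl secondA, Finset.sum_congr rfl secondB]
  ring
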